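/- arXiv:2602.01801 — 2 statements merged into one kernel-verified Lean document; each statement's English description precedes it below -/
import Mathlib

section
/- Monotone error bound for approximate key merging: let s, s' : Fin n → ℝ with |s_i − s'_i| ≤ ε for all i, and let v_i ∈ ℝ^{d'} with ‖v_i‖ ≤ M. Then the softmax-weighted averages satisfy ‖(∑ e^{s_i} v_i)/(∑ e^{s_i}) − (∑ e^{s'_i} v_i)/(∑ e^{s'_i})‖ ≤ 2M(e^{2ε} − 1). -/
/-!
Write both averages with the softmax weights `w = softmax s`, `w' = softmax s'`. Perturbing the
logits by at most `ε` changes each numerator `e^{s_i}` and the normaliser `∑ e^{s_j}` by a factor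
at most `e^ε`, so `w_i ≤ e^{2ε} w'_i` and `w'_i ≤ e^{2ε} w_i`. Hence
`|w_i - w'_i| ≤ (e^{2ε} - 1)(w_i + w'_i)`, and summing against `‖v_i‖ ≤ M` with
`∑ w = ∑ w' = 1` gives the bound.
-/

open Finset Real

theorem abs_sub_le_sub_one_mul_add {a b c : ℝ} (ha : 0 ≤ a) (hb : 0 ≤ b) (hc : 1 ≤ c)
    (hab : a ≤ c * b) (hba : b ≤ c * a) : |a - b| ≤ (c - 1) * (a + b) := by
  rw [abs_le]
  constructor <;> nlinarith

section Softmax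

variable {ι : Type*} [Fintype ι]

noncomputable def softmax (s : ι → ℝ) (i : ι) : ℝ :=
  exp (s i) / ∑ j, exp (s j)

theorem sum_exp_pos [Nonempty ι] (s : ι → ℝ) : 0 < ∑ j, exp (s j) :=
  sum_pos (fun j _ => exp_pos (s j)) univ_nonempty

theorem softmax_nonneg (s : ι → ℝ) (i : ι) : 0 ≤ softmax s i :=
  div_nonneg (exp_pos _).le (sum_nonneg fun j _ => (exp_pos (s j)).le)

theorem sum_softmax [Nonempty ι] (s : ι → ℝ) : ∑ i, softmax s i = 1 := by
  simp only [softmax, ← sum_div, div_self (sum_exp_pos s).ne']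

theorem inv_sum_exp_smul_sum_eq {E : Type*} [AddCommGroup E] [Module ℝ E] (s : ι → ℝ)
    (v : ι → E) : (∑ j, exp (s j))⁻¹ • ∑ i, exp (s i) • v i = ∑ i, softmax s i • v i := by
  simp only [smul_sum, smul_smul, softmax, div_eq_inv_mul]

theorem sum_exp_le_exp_mul_sum_exp {s s' : ι → ℝ} {ε : ℝ} (h : ∀ i, s i ≤ s' i + ε) :
    ∑ i, exp (s i) ≤ exp ε * ∑ i, exp (s' i) := by
  rw [mul_sum]
  gcongr with i
  rw [← exp_add, add_comm ε]
  exact exp_le_exp.2 (h i)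

theorem softmax_le_exp_two_mul_softmax [Nonempty ι] {s s' : ι → ℝ} {ε : ℝ}
    (hε : ∀ i, |s i - s' i| ≤ ε) (i : ι) :
    softmax s i ≤ exp (2 * ε) * softmax s' i := by
  have hup : ∀ j, s j ≤ s' j + ε := fun j => by linarith [(abs_le.1 (hε j)).2]
  have hdown : ∀ j, s' j ≤ s j + ε := fun j => by linarith [(abs_le.1 (hε j)).1]
  have hZ : 0 < ∑ j, exp (s j) := sum_exp_pos s
  have hZ' : 0 < ∑ j, exp (s' j) := sum_exp_pos s'
  have hnum : exp (s i) ≤ exp ε * exp (s' i) := by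
    rw [← exp_add, add_comm ε]
    exact exp_le_exp.2 (hup i)
  have hden := sum_exp_le_exp_mul_sum_exp hdown
  rw [softmax, softmax, div_le_iff₀ hZ, two_mul, exp_add]
  calc exp (s i) ≤ exp ε * exp (s' i) := hnum
    _ = exp ε * (exp (s' i) / ∑ j, exp (s' j)) * ∑ j, exp (s' j) := by field_simp
    _ ≤ exp ε * (exp (s' i) / ∑ j, exp (s' j)) * (exp ε * ∑ j, exp (s j)) := by gcongr
    _ = exp ε * exp ε * (exp (s' i) / ∑ j, exp (s' j)) * ∑ j, exp (s j) := by ring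

theorem norm_sum_softmax_smul_sub_le [Nonempty ι] {E : Type*} [SeminormedAddCommGroup E]
    [NormedSpace ℝ E] {s s' : ι → ℝ} {ε M : ℝ} {v : ι → E}
    (hε : ∀ i, |s i - s' i| ≤ ε) (hM : ∀ i, ‖v i‖ ≤ M) :
    ‖∑ i, softmax s i • v i - ∑ i, softmax s' i • v i‖ ≤ 2 * M * (exp (2 * ε) - 1) := by
  obtain ⟨i₀⟩ := ‹Nonempty ι›
  have hM0 : 0 ≤ M := (norm_nonneg _).trans (hM i₀)
  have hc : 1 ≤ exp (2 * ε) := one_le_exp (by linarith [(abs_nonneg _).trans (hε i₀)])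
  have hε' : ∀ i, |s' i - s i| ≤ ε := fun i => by rw [abs_sub_comm]; exact hε i
  have hweight : ∀ i, |softmax s i - softmax s' i|
      ≤ (exp (2 * ε) - 1) * (softmax s i + softmax s' i) := fun i =>
    abs_sub_le_sub_one_mul_add (softmax_nonneg s i) (softmax_nonneg s' i) hc
      (softmax_le_exp_two_mul_softmax hε i) (softmax_le_exp_two_mul_softmax hε' i)
  rw [← sum_sub_distrib]
  calc ‖∑ i, (softmax s i • v i - softmax s' i • v i)‖
      ≤ ∑ i, (exp (2 * ε) - 1) * (softmax s i + softmax s' i) * M := by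
        refine norm_sum_le_of_le _ fun i _ => ?_
        rw [← sub_smul, norm_smul, Real.norm_eq_abs]
        exact mul_le_mul (hweight i) (hM i) (norm_nonneg _)
          (mul_nonneg (sub_nonneg.2 hc) (add_nonneg (softmax_nonneg s i) (softmax_nonneg s' i)))
    _ = 2 * M * (exp (2 * ε) - 1) := by
        rw [← sum_mul, ← mul_sum, sum_add_distrib, sum_softmax, sum_softmax]
        ring

end Softmax

/-- Monotone error bound for approximate key merging: perturbing each logit by at
most `ε` changes the softmax-weighted average by at most `2M(e^{2ε} - 1)` in norm,
where `M` bounds the norms of the values. -/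
theorem softmax_average_perturbation_bound
    (n d' : ℕ) (hn : 1 ≤ n)
    (s s' : Fin n → ℝ) (ε : ℝ)
    (v : Fin n → EuclideanSpace ℝ (Fin d')) (M : ℝ)
    (hε : ∀ i, |s i - s' i| ≤ ε)
    (hM : ∀ i, ‖v i‖ ≤ M) :
    ‖(∑ i, Real.exp (s i))⁻¹ • (∑ i, Real.exp (s i) • v i)
        - (∑ i, Real.exp (s' i))⁻¹ • (∑ i, Real.exp (s' i) • v i)‖
      ≤ 2 * M * (Real.exp (2 * ε) - 1) := by
  have : NeZero n := ⟨by omega⟩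
  rw [inv_sum_exp_smul_sum_eq, inv_sum_exp_smul_sum_eq]
  exact norm_sum_softmax_smul_sub_le hε hM
end

section
/- Error of dropping low-mass indices: with softmax weights p_i summing to 1 over {1,…,n}, nonempty candidate set N, and ‖v_i‖ ≤ M for all i, the renormalized sparse attention over N and the dense attention differ in norm by at most 2M(1 − r), where r = ∑_{i∈N} p_i is the attention recall of N. -/
/-!
With `r = ∑_{i∈N} p i` the sparse output `a` satisfies `r • a = ∑_{i∈N} p i • v i`, so
`a - ∑ p i • v i = (1 - r) • a - ∑_{i∉N} p i • v i`. Both terms have norm at most `(1 - r) M`: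
`a` is a convex combination of the `v i`, and the dropped weights sum to `1 - r`.
-/

open Finset

section WeightedSums

variable {ι E : Type*} [SeminormedAddCommGroup E] [NormedSpace ℝ E]

theorem norm_sum_smul_le_of_nonneg {s : Finset ι} {c : ι → ℝ} {v : ι → E} {M : ℝ}
    (hc : ∀ i ∈ s, 0 ≤ c i) (hv : ∀ i ∈ s, ‖v i‖ ≤ M) :
    ‖∑ i ∈ s, c i • v i‖ ≤ (∑ i ∈ s, c i) * M := by
  rw [sum_mul]
  refine norm_sum_le_of_le s fun i hi => ?_
  rw [norm_smul, Real.norm_of_nonneg (hc i hi)]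
  exact mul_le_mul_of_nonneg_left (hv i hi) (hc i hi)

theorem smul_sum_div_smul {s : Finset ι} {w : ι → ℝ} {r : ℝ} (hr : r ≠ 0) (v : ι → E) :
    r • ∑ i ∈ s, (w i / r) • v i = ∑ i ∈ s, w i • v i := by
  simp only [smul_sum, smul_smul, mul_div_cancel₀ _ hr]

theorem norm_renormalized_sum_smul_sub_sum_smul_le [Fintype ι] {w : ι → ℝ} {v : ι → E}
    {M : ℝ} (N : Finset ι) (hw : ∀ i, 0 ≤ w i) (hw_sum : ∑ i, w i = 1)
    (hr : 0 < ∑ i ∈ N, w i) (hv : ∀ i, ‖v i‖ ≤ M) :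
    ‖∑ i ∈ N, (w i / ∑ j ∈ N, w j) • v i - ∑ i, w i • v i‖
      ≤ 2 * M * (1 - ∑ i ∈ N, w i) := by
  classical
  set r := ∑ i ∈ N, w i
  set a := ∑ i ∈ N, (w i / r) • v i
  have hcompl : ∑ i ∈ Nᶜ, w i = 1 - r := by
    rw [← hw_sum, ← sum_add_sum_compl N w]; ring
  have hr1 : 0 ≤ 1 - r := hcompl ▸ sum_nonneg fun i _ => hw i
  have ha : ‖a‖ ≤ M := by
    have hsum : ∑ i ∈ N, w i / r = 1 := by rw [← sum_div, div_self hr.ne']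
    simpa [hsum] using norm_sum_smul_le_of_nonneg
      (fun i _ => div_nonneg (hw i) hr.le) (fun i _ => hv i) (s := N)
  have hdropped : ‖∑ i ∈ Nᶜ, w i • v i‖ ≤ (1 - r) * M :=
    hcompl ▸ norm_sum_smul_le_of_nonneg (fun i _ => hw i) (fun i _ => hv i)
  have hsplit : a - ∑ i, w i • v i = (1 - r) • a - ∑ i ∈ Nᶜ, w i • v i := by
    rw [← sum_add_sum_compl N, ← smul_sum_div_smul hr.ne' v, sub_smul, one_smul]
    abel
  calc ‖a - ∑ i, w i • v i‖
      ≤ ‖(1 - r) • a‖ + ‖∑ i ∈ Nᶜ, w i • v i‖ := hsplit ▸ norm_sub_le _ _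
    _ ≤ (1 - r) * M + (1 - r) * M := by
        rw [norm_smul, Real.norm_of_nonneg hr1]
        gcongr
    _ = 2 * M * (1 - r) := by ring

end WeightedSums

section Softmax

variable {ι : Type*} [Fintype ι] [Nonempty ι] (s : ι → ℝ)

theorem sum_exp_pos_s13 : 0 < ∑ l, Real.exp (s l) :=
  sum_pos (fun _ _ => Real.exp_pos _) univ_nonempty

theorem softmax_pos (i : ι) : 0 < Real.exp (s i) / ∑ l, Real.exp (s l) :=
  div_pos (Real.exp_pos _) (sum_exp_pos_s13 s)

theorem sum_softmax_s13 : ∑ i, Real.exp (s i) / ∑ l, Real.exp (s l) = 1 := by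
  rw [← sum_div, div_self (sum_exp_pos_s13 s).ne']

end Softmax

theorem sparse_attention_recall_error_bound_general
    (n d' : ℕ)
    (s : Fin n → ℝ)
    (v : Fin n → EuclideanSpace ℝ (Fin d')) (M : ℝ)
    (N : Finset (Fin n)) (hN : N.Nonempty)
    (p : Fin n → ℝ)
    (hp : ∀ i, p i = Real.exp (s i) / (∑ l, Real.exp (s l)))
    (hM : ∀ i, ‖v i‖ ≤ M) :
    ‖(∑ i ∈ N, (p i / (∑ l ∈ N, p l)) • v i) - ∑ i, p i • v i‖
      ≤ 2 * M * (1 - ∑ l ∈ N, p l) := by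
  have : Nonempty (Fin n) := hN.to_type.map (↑)
  have hp_pos : ∀ i, 0 < p i := fun i => hp i ▸ softmax_pos s i
  have hp_sum : ∑ i, p i = 1 := by simp only [hp, sum_softmax_s13]
  exact norm_renormalized_sum_smul_sub_sum_smul_le N (fun i => (hp_pos i).le) hp_sum
    (sum_pos (fun i _ => hp_pos i) hN) hM

/-- Error of dropping low-mass indices: with softmax weights `p`, recall
`r = ∑_{i∈N} p i`, and `‖v i‖ ≤ M`, the renormalized sparse attention over `N`
differs from the dense attention by at most `2M(1 - r)` in norm. -/
theorem sparse_attention_recall_error_bound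
    (n d' : ℕ) (hn : 1 ≤ n)
    (s : Fin n → ℝ)
    (v : Fin n → EuclideanSpace ℝ (Fin d')) (M : ℝ)
    (N : Finset (Fin n)) (hN : N.Nonempty)
    (p : Fin n → ℝ)
    (hp : ∀ i, p i = Real.exp (s i) / (∑ l, Real.exp (s l)))
    (hM : ∀ i, ‖v i‖ ≤ M) :
    ‖(∑ i ∈ N, (p i / (∑ l ∈ N, p l)) • v i) - ∑ i, p i • v i‖
      ≤ 2 * M * (1 - ∑ l ∈ N, p l) :=
  sparse_attention_recall_error_bound_general n d' s v M N hN p hp hM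
end
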